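/- Let U = {p ∈ ℝ^d : W p ≤ h} be a nonempty bounded polyhedron, let m ∈ U, s ≥ 0, and take risk levels ε_i = 1 for every player i. Then x ∈ S is a distributionally robust optimization equilibrium for the ambiguity set 𝓕(W,h,m,s) if and only if x is a Nash equilibrium of the complete-information game with the payoff matrix M satisfying vec(M) = m. -/

import Mathlib

/-!
At risk level one CVaR is the expectation: `ζ + E (L - ζ)⁺ = E L + E (ζ - L)⁺`, and the
last term tends to `0` as `ζ → -∞` by dominated convergence. The loss `-π_i(·; y)` is linear
in the payoff matrix, so under every `Q ∈ 𝓕(W,h,m,s)` its expectation is `-π_i(M; y)`, fixed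
by the mean constraint. Since `𝓕(W,h,m,s)` contains the Dirac mass at `M`, the worst case
over it is `-π_i(M; y)` as well, and the equilibrium inequalities become the Nash
inequalities for `M`.
-/

open MeasureTheory Matrix

namespace DRG

/-- A payoff matrix: assigns to each player `i` and each joint action a real payoff. -/
abbrev Payoff (N : ℕ) (a : Fin N → ℕ) : Type := Fin N → (∀ k : Fin N, Fin (a k)) → ℝ

/-- A (not necessarily feasible) strategy profile. -/
abbrev Strategy (N : ℕ) (a : Fin N → ℕ) : Type := ∀ k : Fin N, Fin (a k) → ℝ

/-- Index type for the vectorization of a payoff matrix. -/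
abbrev Idx (N : ℕ) (a : Fin N → ℕ) : Type := Fin N × (∀ k : Fin N, Fin (a k))

/-- Vectorization of a payoff matrix. -/
def vecP {N : ℕ} {a : Fin N → ℕ} (P : Payoff N a) : Idx N a → ℝ := fun q => P q.1 q.2

/-- The mixed-strategy simplex `S_n`. -/
def simplex (n : ℕ) : Set (Fin n → ℝ) := {x | (∀ j, 0 ≤ x j) ∧ ∑ j, x j = 1}

/-- The set `S` of mixed strategy profiles. -/
def profiles (N : ℕ) (a : Fin N → ℕ) : Set (Strategy N a) :=
  {x | ∀ i, x i ∈ simplex (a i)}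

/-- Expected payoff `π_i(P;x)`. -/
noncomputable def pay {N : ℕ} {a : Fin N → ℕ} (P : Payoff N a) (i : Fin N)
    (x : Strategy N a) : ℝ :=
  ∑ j : (∀ k : Fin N, Fin (a k)), P i j * ∏ k, x k (j k)

/-- Nash equilibrium of the complete information game with payoff matrix `P`. -/
def IsNashEq {N : ℕ} {a : Fin N → ℕ} (P : Payoff N a) (x : Strategy N a) : Prop :=
  x ∈ profiles N a ∧ ∀ i : Fin N, ∀ u ∈ simplex (a i),
    pay P i (Function.update x i u) ≤ pay P i x

/-- Robust optimization equilibrium for uncertainty set `U`. -/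
def IsRobustEq {N : ℕ} {a : Fin N → ℕ} (U : Set (Payoff N a)) (x : Strategy N a) : Prop :=
  x ∈ profiles N a ∧ ∀ i : Fin N, ∀ u ∈ simplex (a i),
    (⨅ P : U, pay (P : Payoff N a) i (Function.update x i u)) ≤
      ⨅ P : U, pay (P : Payoff N a) i x

/-- Conditional value at risk of the loss `L` at level `ε` under `Q`. -/
noncomputable def cvar {V : Type*} [MeasurableSpace V] (Q : Measure V) (ε : ℝ)
    (L : V → ℝ) : ℝ :=
  ⨅ ζ : ℝ, (ζ + (1 / ε) * ∫ p, max (L p - ζ) 0 ∂Q)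

/-- Distributionally robust optimization equilibrium for ambiguity set `𝓕` and
risk levels `ε`. -/
def IsDREq {N : ℕ} {a : Fin N → ℕ} (𝓕 : Set (Measure (Payoff N a))) (ε : Fin N → ℝ)
    (x : Strategy N a) : Prop :=
  x ∈ profiles N a ∧ ∀ i : Fin N, ∀ u ∈ simplex (a i),
    (⨆ Q : 𝓕, cvar (Q : Measure (Payoff N a)) (ε i) (fun P => - pay P i x)) ≤
      ⨆ Q : 𝓕, cvar (Q : Measure (Payoff N a)) (ε i)
        (fun P => - pay P i (Function.update x i u))

/-- The ambiguity set `𝓕(W,h,m,s)`. -/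
def ambiguity {N : ℕ} {a : Fin N → ℕ} (r : ℕ) (W : Matrix (Fin r) (Idx N a) ℝ)
    (h : Fin r → ℝ) (m : Idx N a → ℝ) (s : ℝ) : Set (Measure (Payoff N a)) :=
  {Q | IsProbabilityMeasure Q ∧ Integrable (fun p => p) Q ∧
    Q {P | ∀ t, (W *ᵥ vecP P) t ≤ h t} = 1 ∧
    vecP (∫ p, p ∂Q) = m ∧
    (∫ p, ∑ q, |vecP p q - m q| ∂Q) ≤ s}

/-- The matrix `Y^i(x^{-i})` satisfying `vec(P)ᵀ Y^i(x^{-i}) uⁱ = π_i(P;(x^{-i},uⁱ))`. -/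
noncomputable def Ymat {N : ℕ} {a : Fin N → ℕ} (i : Fin N) (x : Strategy N a) :
    Matrix (Idx N a) (Fin (a i)) ℝ :=
  Matrix.of fun q l =>
    if q.1 = i ∧ q.2 i = l then ∏ r ∈ Finset.univ.erase i, x r (q.2 r) else 0

open Filter Topology

section CVaR

variable {V : Type*} [MeasurableSpace V] {Q : Measure V} {L : V → ℝ}

lemma tendsto_integral_max_sub_atBot (hL : Integrable L Q) :
    Tendsto (fun ζ : ℝ => ∫ p, max (ζ - L p) 0 ∂Q) atBot (𝓝 0) := by
  have hmeas : ∀ ζ : ℝ, AEStronglyMeasurable (fun p => max (ζ - L p) 0) Q := fun ζ => by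
    have := hL.aestronglyMeasurable; fun_prop
  have hbound : ∀ ζ ≤ (0 : ℝ), ∀ p, ‖max (ζ - L p) 0‖ ≤ |L p| := fun ζ hζ p => by
    rw [Real.norm_of_nonneg (le_max_right _ _)]
    exact max_le (by linarith [neg_abs_le (L p)]) (abs_nonneg _)
  have hlim : ∀ p, Tendsto (fun ζ : ℝ => max (ζ - L p) 0) atBot (𝓝 0) := fun p =>
    tendsto_const_nhds.congr' <| (eventually_le_atBot (L p)).mono fun ζ hζ =>
      (max_eq_right (sub_nonpos.2 hζ)).symm
  simpa using tendsto_integral_filter_of_dominated_convergence (fun p => |L p|)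
    (Eventually.of_forall hmeas)
    ((eventually_le_atBot 0).mono fun ζ hζ => Eventually.of_forall (hbound ζ hζ))
    hL.abs (Eventually.of_forall hlim)

lemma add_integral_max_sub_eq [IsProbabilityMeasure Q] (hL : Integrable L Q) (ζ : ℝ) :
    ζ + ∫ p, max (L p - ζ) 0 ∂Q = ∫ p, L p ∂Q + ∫ p, max (ζ - L p) 0 ∂Q := by
  have hLζ : Integrable (fun p => L p - ζ) Q := hL.sub (integrable_const ζ)
  have hζL : Integrable (fun p => max (ζ - L p) 0) Q := ((integrable_const ζ).sub hL).pos_part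
  have hsplit : ∀ p, max (L p - ζ) 0 = (L p - ζ) + max (ζ - L p) 0 := fun p => by
    rcases le_total (L p) ζ with h | h <;> simp [h]
  simp_rw [hsplit]
  rw [integral_add hLζ hζL, integral_sub hL (integrable_const ζ)]
  simp only [integral_const, probReal_univ, smul_eq_mul, one_mul]
  ring

theorem cvar_one_eq_integral [IsProbabilityMeasure Q] (hL : Integrable L Q) :
    cvar Q 1 L = ∫ p, L p ∂Q := by
  have hge : ∀ ζ, ∫ p, L p ∂Q ≤ ∫ p, L p ∂Q + ∫ p, max (ζ - L p) 0 ∂Q := fun ζ =>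
    le_add_of_nonneg_right (integral_nonneg fun p => le_max_right _ _)
  unfold cvar
  simp only [one_div_one, one_mul, add_integral_max_sub_eq hL]
  have hlim : Tendsto (fun ζ => ∫ p, L p ∂Q + ∫ p, max (ζ - L p) 0 ∂Q) atBot
      (𝓝 (∫ p, L p ∂Q)) := by
    simpa using tendsto_const_nhds.add (tendsto_integral_max_sub_atBot hL)
  exact le_antisymm (ge_of_tendsto hlim (Eventually.of_forall fun ζ =>
    ciInf_le ⟨_, Set.forall_mem_range.2 hge⟩ ζ)) (le_ciInf hge)

end CVaR

section Payoff

variable {N : ℕ} {a : Fin N → ℕ}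

noncomputable def payCLM (i : Fin N) (y : Strategy N a) : Payoff N a →L[ℝ] ℝ :=
  LinearMap.toContinuousLinearMap
    { toFun := fun P => pay P i y
      map_add' := fun P P' => by simp only [pay, Pi.add_apply, add_mul, Finset.sum_add_distrib]
      map_smul' := fun c P => by
        simp only [pay, Pi.smul_apply, smul_eq_mul, mul_assoc, RingHom.id_apply, Finset.mul_sum] }

lemma integrable_pay {Q : Measure (Payoff N a)} (hQ : Integrable (fun p => p) Q)
    (i : Fin N) (y : Strategy N a) : Integrable (fun P => pay P i y) Q :=
  (payCLM i y).integrable_comp hQ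

lemma integral_pay {Q : Measure (Payoff N a)} (hQ : Integrable (fun p => p) Q)
    (i : Fin N) (y : Strategy N a) : ∫ P, pay P i y ∂Q = pay (∫ p, p ∂Q) i y :=
  (payCLM i y).integral_comp_comm hQ

lemma dirac_mem_ambiguity {r : ℕ} {W : Matrix (Fin r) (Idx N a) ℝ} {h : Fin r → ℝ}
    {m : Idx N a → ℝ} (hm : ∀ t, (W *ᵥ m) t ≤ h t) {s : ℝ} (hs : 0 ≤ s)
    {M : Payoff N a} (hM : vecP M = m) :
    Measure.dirac M ∈ ambiguity r W h m s := by
  subst hM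
  refine ⟨inferInstance, integrable_dirac ?_, Measure.dirac_apply_of_mem hm, ?_, ?_⟩
  · simp
  · rw [integral_dirac]
  · rw [integral_dirac]
    simpa using hs

lemma cvar_one_neg_pay_of_mem_ambiguity {r : ℕ} {W : Matrix (Fin r) (Idx N a) ℝ}
    {h : Fin r → ℝ} {m : Idx N a → ℝ} {s : ℝ} {Q : Measure (Payoff N a)}
    (hQ : Q ∈ ambiguity r W h m s) {M : Payoff N a} (hM : vecP M = m) (i : Fin N)
    (y : Strategy N a) : cvar Q 1 (fun P => - pay P i y) = - pay M i y := by
  obtain ⟨hprob, hint, -, hmean, -⟩ := hQ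
  have hmeanM : ∫ p, p ∂Q = M := funext fun i' => funext fun j' =>
    congrFun (hmean.trans hM.symm) (i', j')
  rw [cvar_one_eq_integral (L := fun P => - pay P i y) (integrable_pay hint i y).neg,
    integral_neg, integral_pay hint, hmeanM]

end Payoff

theorem drEq_iff_nashEq_of_riskNeutral_general {N r : ℕ}
    (a : Fin N → ℕ)
    (W : Matrix (Fin r) (Idx N a) ℝ) (h : Fin r → ℝ) (m : Idx N a → ℝ)
    (hm : ∀ t, (W *ᵥ m) t ≤ h t) (s : ℝ) (hs : 0 ≤ s)
    (M : Payoff N a) (hM : vecP M = m) (x : Strategy N a) :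
    IsDREq (ambiguity r W h m s) (fun _ => 1) x ↔ IsNashEq M x := by
  have : Nonempty (ambiguity r W h m s) := ⟨⟨_, dirac_mem_ambiguity hm hs hM⟩⟩
  have hworst : ∀ i y, (⨆ Q : ambiguity r W h m s, cvar (Q : Measure (Payoff N a)) 1
      (fun P => - pay P i y)) = - pay M i y := fun i y => by
    simp only [cvar_one_neg_pay_of_mem_ambiguity (Subtype.prop _) hM, ciSup_const]
  simp only [IsDREq, IsNashEq, hworst, neg_le_neg_iff]

/-- **Special case: risk-neutral players.**
Let `U = {p : W p ≤ h}` be a nonempty bounded polyhedron, `m ∈ U`, `s ≥ 0`, and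
take risk levels `ε_i = 1` for every player.  Then `x ∈ S` is a
distributionally robust optimization equilibrium for the ambiguity set
`𝓕(W,h,m,s)` iff `x` is a Nash equilibrium of the complete-information game
with the payoff matrix `M` satisfying `vec(M) = m`. -/
theorem drEq_iff_nashEq_of_riskNeutral {N r : ℕ} (hN : 1 ≤ N)
    (a : Fin N → ℕ) (ha : ∀ i, 1 ≤ a i)
    (W : Matrix (Fin r) (Idx N a) ℝ) (h : Fin r → ℝ) (m : Idx N a → ℝ)
    (hne : {p : Idx N a → ℝ | ∀ t, (W *ᵥ p) t ≤ h t}.Nonempty)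
    (hbdd : Bornology.IsBounded {p : Idx N a → ℝ | ∀ t, (W *ᵥ p) t ≤ h t})
    (hm : ∀ t, (W *ᵥ m) t ≤ h t) (s : ℝ) (hs : 0 ≤ s)
    (M : Payoff N a) (hM : vecP M = m) (x : Strategy N a) :
    IsDREq (ambiguity r W h m s) (fun _ => 1) x ↔ IsNashEq M x :=
  drEq_iff_nashEq_of_riskNeutral_general a W h m hm s hs M hM x

end DRG
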